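/- Let S be a set, a ≠ b two elements of S with indicator functions A, B : S → ℚ (A(a) = 1, A(s) = 0 for s ≠ a; similarly B), and let w = (s₁^{ε₁}, …, s_n^{ε_n}) be a word with Σᵢ εᵢ·A(sᵢ) = 0, i.e. with equally many occurrences of the letter a and of the letter a⁻¹. Let P⁺ = {i : sᵢ = a, εᵢ = +1}, P⁻ = {i : sᵢ = a, εᵢ = −1}, and let M : P⁺ → P⁻ be ANY bijection (a pairing-off of a's with a⁻¹'s). Then the letter-braiding value ⌊A⌉B(w) equals the signed count of b's between the chosen a–a⁻¹ pairs: ⌊A⌉B(w) = Σ_{p ∈ P⁺} sgn(p) · ( Σ over positions j strictly between p and M(p) with sⱼ = b of εⱼ ), where sgn(p) = +1 if p < M(p) and sgn(p) = −1 if M(p) < p. In particular the right-hand side is independent of the choice of pairing M. -/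

import Mathlib

namespace Braiding

variable {S : Type*}

/-- A word over `S`: a list of letters, each a generator together with an exponent,
`true` standing for `+1` and `false` for `-1`. Positions are indexed from `0`. -/
abbrev Word (S : Type*) := List (S × Bool)

/-- The rational sign of an exponent: `+1` for `true`, `-1` for `false`. -/
def sgn (b : Bool) : ℚ := if b then 1 else -1

/-- The exponent of the letter at position `j` (junk value `true` out of range). -/
def epsAt (w : Word S) (j : ℕ) : Bool := (w[j]?.map Prod.snd).getD true

/-- The induced d-function `w*h` of a homomorphism datum `h : S → ℚ`:
`(w*h)(i) = εᵢ · h(sᵢ)` (and `0` out of range). -/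
def indD (h : S → ℚ) (w : Word S) (i : ℕ) : ℚ :=
  match w[i]? with
  | some (s, b) => sgn b * h s
  | none => 0

/-- The relation `i ≤_w j`: `i < j` if `ε_j = +1`, and `i ≤ j` if `ε_j = -1`. -/
def leW (w : Word S) (i j : ℕ) : Prop :=
  if epsAt w j = true then i < j else i ≤ j

instance (w : Word S) (i j : ℕ) : Decidable (leW w i j) := by
  unfold leW; infer_instance

/-- The cobounding `⌊f⌉_w(j) = Σ_{i ≤_w j} f(i)` of a d-function. -/
def cobound (w : Word S) (f : ℕ → ℚ) (j : ℕ) : ℚ :=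
  ∑ i ∈ Finset.range w.length, if leW w i j then f i else 0

/-- The braiding product `(⌊f⌉_w g)(j) = ⌊f⌉_w(j) · g(j)`. -/
def braidMul (w : Word S) (f g : ℕ → ℚ) (j : ℕ) : ℚ := cobound w f j * g j

/-- The discrete integral `∫ f = Σ_{i=1}^{n} f(i)` of a d-function on a word of length `n`. -/
def integ (w : Word S) (f : ℕ → ℚ) : ℚ := ∑ i ∈ Finset.range w.length, f i

/-- Homogeneous braiding symbols over `S`: every `h : S → ℚ` is one (of weight 1),
and braiding products `⌊α⌉β` of homogeneous braiding symbols are ones. -/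
inductive HSymbol (S : Type*) where
  | leaf : (S → ℚ) → HSymbol S
  | node : HSymbol S → HSymbol S → HSymbol S

namespace HSymbol

/-- The weight (number of decorating functions) of a homogeneous braiding symbol. -/
def weight : HSymbol S → ℕ
  | leaf _ => 1
  | node α β => weight α + weight β

/-- The associated d-function `w*σ` of a homogeneous braiding symbol on a word `w`. -/
def dfun (w : Word S) : HSymbol S → ℕ → ℚ
  | leaf h => indD h w
  | node α β => braidMul w (dfun w α) (dfun w β)

/-- The letter-braiding value `σ(w) = ∫ w*σ`. -/
def value (σ : HSymbol S) (w : Word S) : ℚ := integ w (σ.dfun w)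

end HSymbol

/-- The element of the free group `F_S` represented by a word:
the product `s₁^{ε₁} ⋯ s_n^{ε_n}`. -/
def wordProd (w : Word S) : FreeGroup S :=
  (w.map (fun p => if p.2 then FreeGroup.of p.1 else (FreeGroup.of p.1)⁻¹)).prod

end Braiding

/-!
Since `a ≠ b`, no position carries both letters, so `⌊A⌉B(w) = Σᵢ (w*A)(i) · T(i)`, where
`T(i)` is the signed count of `b`'s after position `i`. The factor `(w*A)(i)` is `+1` on the
`a`'s, `-1` on the `a⁻¹`'s and `0` elsewhere; reindexing the `a⁻¹`'s through `M`, the value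
becomes `Σₚ (T(p) - T(M p))`, and `T(p) - T(M p)` is, up to the sign of `M p - p`, the signed
count of `b`'s strictly between `p` and `M p`.
-/

namespace Braiding

variable {S : Type*}

lemma indD_coe (h : S → ℚ) (w : Word S) (i : Fin w.length) :
    indD h w i = sgn (w.get i).2 * h (w.get i).1 := by
  simp [indD]

lemma indD_indicator [DecidableEq S] (a : S) (w : Word S) (i : Fin w.length) :
    indD (fun s => if s = a then (1 : ℚ) else 0) w i =
      if (w.get i).1 = a then sgn (w.get i).2 else 0 := by
  rw [indD_coe]
  split_ifs <;> simp

lemma leW_iff_lt_of_ne (w : Word S) {i : ℕ} {j : Fin w.length} (hij : i ≠ j) :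
    leW w i j ↔ i < j := by
  unfold leW epsAt
  rw [List.getElem?_eq_getElem j.isLt]
  split_ifs <;> omega

lemma value_node_leaf_leaf (h k : S → ℚ) (w : Word S) :
    (HSymbol.node (HSymbol.leaf h) (HSymbol.leaf k)).value w =
      ∑ i : Fin w.length, ∑ j : Fin w.length,
        if leW w i j then indD h w i * indD k w j else 0 := by
  simp only [HSymbol.value, HSymbol.dfun, integ, braidMul, cobound, Finset.sum_mul,
    ite_mul, zero_mul, ← Fin.sum_univ_eq_sum_range]
  exact Finset.sum_comm

lemma value_node_leaf_leaf_of_disjoint (h k : S → ℚ) (hhk : ∀ s, h s = 0 ∨ k s = 0)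
    (w : Word S) :
    (HSymbol.node (HSymbol.leaf h) (HSymbol.leaf k)).value w =
      ∑ i : Fin w.length, indD h w i * ∑ j : Fin w.length,
        if i < j then indD k w j else 0 := by
  rw [value_node_leaf_leaf]
  refine Finset.sum_congr rfl fun i _ => ?_
  rw [Finset.mul_sum]
  refine Finset.sum_congr rfl fun j _ => ?_
  by_cases hij : i = j
  · subst hij
    rcases hhk (w.get i).1 with h0 | h0 <;> simp only [indD_coe, h0, mul_zero, zero_mul, ite_self]
  · simp only [leW_iff_lt_of_ne w (Fin.val_ne_of_ne hij), mul_ite, mul_zero, Fin.lt_def]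

lemma sum_indD_indicator_mul [DecidableEq S] (a : S) (w : Word S) (g : Fin w.length → ℚ) :
    ∑ i : Fin w.length, indD (fun s => if s = a then (1 : ℚ) else 0) w i * g i =
      ∑ p : {i : Fin w.length // (w.get i).1 = a ∧ (w.get i).2 = true}, g p -
        ∑ q : {i : Fin w.length // (w.get i).1 = a ∧ (w.get i).2 = false}, g q := by
  rw [← Finset.sum_subtype (Finset.univ.filter fun i => (w.get i).1 = a ∧ (w.get i).2 = true)
      (by simp) g,
    ← Finset.sum_subtype (Finset.univ.filter fun i => (w.get i).1 = a ∧ (w.get i).2 = false)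
      (by simp) g,
    Finset.sum_filter, Finset.sum_filter, ← Finset.sum_sub_distrib]
  refine Finset.sum_congr rfl fun i _ => ?_
  rw [indD_indicator]
  simp only [List.get_eq_getElem]
  cases w[(i : ℕ)].2 <;> split_ifs <;> simp_all [sgn]

lemma sum_tail_sub_sum_tail {n : ℕ} (f : Fin n → ℚ) {p q : Fin n} (hp : f p = 0)
    (hq : f q = 0) :
    (∑ j, if p < j then f j else 0) - (∑ j, if q < j then f j else 0) =
      (if (p : ℕ) < q then 1 else -1) *
        ∑ j : Fin n, if min (p : ℕ) q < j ∧ (j : ℕ) < max (p : ℕ) q then f j else 0 := by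
  rw [← Finset.sum_sub_distrib, Finset.mul_sum]
  refine Finset.sum_congr rfl fun j _ => ?_
  by_cases hjp : j = p
  · subst hjp; simp [hp]
  by_cases hjq : j = q
  · subst hjq; simp [hq]
  have hjp' : (j : ℕ) ≠ p := Fin.val_ne_of_ne hjp
  have hjq' : (j : ℕ) ≠ q := Fin.val_ne_of_ne hjq
  simp only [Fin.lt_def, min_def, max_def]
  split_ifs <;> first | ring1 | (exfalso; omega)

end Braiding

open Braiding in
theorem weight_two_letterLinking_counts_b_between_a_pairs_general {S : Type*} [DecidableEq S]
    (a b : S) (hab : a ≠ b) (w : Word S)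
    (M : {i : Fin w.length // (w.get i).1 = a ∧ (w.get i).2 = true} →
         {i : Fin w.length // (w.get i).1 = a ∧ (w.get i).2 = false})
    (hM : Function.Bijective M) :
    (HSymbol.node
        (HSymbol.leaf (fun s => if s = a then (1 : ℚ) else 0))
        (HSymbol.leaf (fun s => if s = b then (1 : ℚ) else 0))).value w =
      ∑ p : {i : Fin w.length // (w.get i).1 = a ∧ (w.get i).2 = true},
        (if ((p : Fin w.length) : ℕ) < (((M p) : Fin w.length) : ℕ)
            then (1 : ℚ) else -1) *
          ∑ j : Fin w.length,
            if min ((p : Fin w.length) : ℕ) (((M p) : Fin w.length) : ℕ) < (j : ℕ) ∧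
                (j : ℕ) < max ((p : Fin w.length) : ℕ) (((M p) : Fin w.length) : ℕ) ∧
                (w.get j).1 = b then
              sgn (w.get j).2
            else 0 := by
  set B : S → ℚ := fun s => if s = b then (1 : ℚ) else 0
  have hdisjoint : ∀ s, (if s = a then (1 : ℚ) else 0) = 0 ∨ B s = 0 := fun s => by
    by_cases hsa : s = a <;> simp [B, hsa, hab]
  have hB_off_a {i : Fin w.length} (hi : (w.get i).1 = a) : indD B w i = 0 := by
    rw [indD_indicator, if_neg (by rw [hi]; exact hab)]
  rw [value_node_leaf_leaf_of_disjoint _ _ hdisjoint, sum_indD_indicator_mul,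
    ← hM.sum_comp, ← Finset.sum_sub_distrib]
  refine Finset.sum_congr rfl fun p _ => ?_
  rw [sum_tail_sub_sum_tail _ (hB_off_a p.2.1) (hB_off_a (M p).2.1)]
  simp only [B, indD_indicator, ite_and]

open Braiding in
/-- Let `A`, `B` be the indicator functions of distinct generators
`a ≠ b`, and let `w` be a word in which the signed count of occurrences of `a` vanishes.
Then for ANY bijection `M` pairing off the positions of `a` with the positions of `a⁻¹`,
the letter-braiding value `⌊A⌉B(w)` equals the signed count of `b`'s occurring strictly
between the chosen `a`–`a⁻¹` pairs, with the sign of a pair `p` being `+1` if `p < M(p)`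
and `-1` otherwise.  In particular the right-hand side is independent of `M`. -/
theorem weight_two_letterLinking_counts_b_between_a_pairs {S : Type*} [DecidableEq S]
    (a b : S) (hab : a ≠ b) (w : Word S)
    (hw : integ w (indD (fun s => if s = a then (1 : ℚ) else 0) w) = 0)
    (M : {i : Fin w.length // (w.get i).1 = a ∧ (w.get i).2 = true} →
         {i : Fin w.length // (w.get i).1 = a ∧ (w.get i).2 = false})
    (hM : Function.Bijective M) :
    (HSymbol.node
        (HSymbol.leaf (fun s => if s = a then (1 : ℚ) else 0))
        (HSymbol.leaf (fun s => if s = b then (1 : ℚ) else 0))).value w =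
      ∑ p : {i : Fin w.length // (w.get i).1 = a ∧ (w.get i).2 = true},
        (if ((p : Fin w.length) : ℕ) < (((M p) : Fin w.length) : ℕ)
            then (1 : ℚ) else -1) *
          ∑ j : Fin w.length,
            if min ((p : Fin w.length) : ℕ) (((M p) : Fin w.length) : ℕ) < (j : ℕ) ∧
                (j : ℕ) < max ((p : Fin w.length) : ℕ) (((M p) : Fin w.length) : ℕ) ∧
                (w.get j).1 = b then
              sgn (w.get j).2
            else 0 :=
  weight_two_letterLinking_counts_b_between_a_pairs_general a b hab w M hM
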